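/- Amplitude bound when a is even: let F : ℝ → ℝ be real analytic with F(0) = 0 and F′(0) = −c for some c > 0, and let B ∈ ℝ. Let φ̄₊ > 0 satisfy F′(φ̄₊) = 0 and F′(s) ≠ 0 for all 0 < s < φ̄₊, and suppose a := min{n ≥ 2 : F^{(n)}(φ̄₊) ≠ 0} exists and is even. Then every continuous 2π-periodic function φ : ℝ → ℝ with zero mean satisfying F(φ(x)) = −(K∗φ)(x) + B for all x ∈ ℝ satisfies φ(x) ≤ φ̄₊ for all x ∈ ℝ. -/

import Mathlib

open Real MeasureTheory Filter

/-- The 2π-periodic kernel of `D⁻²`, equal to `(1/(4π))(|x|−π)² − π/12` on `[−π,π]`. -/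
noncomputable def Kper (x : ℝ) : ℝ :=
  (1 / (4 * π)) * (|x - 2 * π * ((round (x / (2 * π)) : ℤ) : ℝ)| - π) ^ 2 - π / 12

/-- Periodic convolution with the kernel `Kper`. -/
noncomputable def Kconv (φ : ℝ → ℝ) (x : ℝ) : ℝ :=
  ∫ y in (-π)..π, Kper (x - y) * φ y

open Set Topology
open scoped ContDiff

/-!
Because `K'' = 1/(2π) - δ₀` and `φ` has zero mean, `W := -(K∗φ) + B` satisfies `W'' = φ`; this is
made explicit by writing `K∗φ` through primitives of `y ↦ yᵏ φ(y)`, `k ≤ 2`.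

If `φ(x₀) > φ̄₊`, then, as `φ` is nonpositive somewhere in every period, `x₀` lies in an interval
`(α, β)` on which `φ > φ̄₊`, with `φ = φ̄₊` at both ends. There `W = F ∘ φ` is strictly convex and
`W(α) = W(β) = F(φ̄₊)`, so `F(φ) < F(φ̄₊)` on `(α, β)`. On the other hand `F'` is negative on
`(0, φ̄₊)` and vanishes to the odd order `a - 1` at `φ̄₊`, so it changes sign there and `F`
increases just to the right of `φ̄₊`; hence `F(φ) > F(φ̄₊)` just to the right of `α`.
-/

theorem exists_eq_iteratedDeriv_mul_pow_of_iteratedDeriv_eq_zero {g : ℝ → ℝ} {x₀ x : ℝ}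
    {n : ℕ} (hg : ContDiff ℝ (n + 1) g) (hx : x₀ ≠ x)
    (hvan : ∀ m ≤ n, iteratedDeriv m g x₀ = 0) :
    ∃ ξ ∈ uIoo x₀ x, g x = iteratedDeriv (n + 1) g ξ * (x - x₀) ^ (n + 1) / (n + 1).factorial := by
  obtain ⟨ξ, hξ, hrem⟩ := taylor_mean_remainder_lagrange_iteratedDeriv hx hg.contDiffOn
  have htaylor : taylorWithinEval g n (uIcc x₀ x) x₀ x = 0 := by
    rw [taylor_within_apply]
    refine Finset.sum_eq_zero fun k hk => ?_
    have hk : k ≤ n := Nat.lt_succ_iff.1 (Finset.mem_range.1 hk)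
    rw [iteratedDerivWithin_eq_iteratedDeriv (uniqueDiffOn_uIcc hx)
      (hg.contDiffAt.of_le (by exact_mod_cast hk.trans n.le_succ)) left_mem_uIcc, hvan k hk]
    simp
  exact ⟨ξ, hξ, by rwa [htaylor, sub_zero] at hrem⟩

theorem eventually_pos_iteratedDeriv_mul_pow_mul {g : ℝ → ℝ} {x₀ : ℝ} {n : ℕ}
    (hg : ContDiff ℝ (n + 1) g) (hvan : ∀ m ≤ n, iteratedDeriv m g x₀ = 0)
    (hnz : iteratedDeriv (n + 1) g x₀ ≠ 0) :
    ∀ᶠ x in 𝓝[≠] x₀, 0 < iteratedDeriv (n + 1) g x₀ * ((x - x₀) ^ (n + 1) * g x) := by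
  set D := iteratedDeriv (n + 1) g
  have hD : Continuous D := hg.continuous_iteratedDeriv (n + 1) le_rfl
  have hsign : ∀ᶠ y in 𝓝 x₀, 0 < D x₀ * D y :=
    ((continuous_const.mul hD).tendsto x₀).eventually_const_lt (mul_self_pos.2 hnz)
  obtain ⟨ε, hε, hball⟩ := Metric.eventually_nhds_iff_ball.1 hsign
  filter_upwards [inter_mem_nhdsWithin {x₀}ᶜ (Metric.ball_mem_nhds x₀ hε)] with x ⟨hne, hx⟩
  obtain ⟨ξ, hξ, hgx⟩ :=
    exists_eq_iteratedDeriv_mul_pow_of_iteratedDeriv_eq_zero hg (Ne.symm hne) hvan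
  have hξball : ξ ∈ Metric.ball x₀ ε :=
    (convex_ball x₀ ε).ordConnected.uIcc_subset (Metric.mem_ball_self hε) hx
      (uIoo_subset_uIcc_self hξ)
  have hDξ := hball ξ hξball
  have hpow : 0 < ((x - x₀) ^ (n + 1)) ^ 2 := by
    have := sub_ne_zero.2 hne
    positivity
  calc 0 < D x₀ * D ξ * ((x - x₀) ^ (n + 1)) ^ 2 / (n + 1).factorial := by positivity
    _ = D x₀ * ((x - x₀) ^ (n + 1) * g x) := by rw [hgx]; ring

theorem eventually_pos_nhdsGT_of_odd_order {g : ℝ → ℝ} {x₀ : ℝ} {n : ℕ}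
    (hg : ContDiff ℝ (n + 1) g) (hvan : ∀ m ≤ n, iteratedDeriv m g x₀ = 0)
    (hnz : iteratedDeriv (n + 1) g x₀ ≠ 0) (hodd : Odd (n + 1))
    (hleft : ∃ᶠ x in 𝓝[<] x₀, g x < 0) :
    ∀ᶠ x in 𝓝[>] x₀, 0 < g x := by
  have hsign := eventually_pos_iteratedDeriv_mul_pow_mul hg hvan hnz
  obtain ⟨y, hy, hgy, hylt⟩ :=
    ((hsign.filter_mono (nhdsLT_le_nhdsNE x₀)).and_frequently
      (hleft.and_eventually self_mem_nhdsWithin)).exists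
  have hD : 0 < iteratedDeriv (n + 1) g x₀ :=
    pos_of_mul_pos_left hy (mul_pos_of_neg_of_neg (hodd.pow_neg (sub_neg.2 hylt)) hgy).le
  filter_upwards [hsign.filter_mono (nhdsGT_le_nhdsNE x₀), self_mem_nhdsWithin] with x hx hgt
  exact pos_of_mul_pos_right (pos_of_mul_pos_right hx hD.le) (pow_pos (sub_pos.2 hgt) _).le

theorem neg_on_Ioo_of_ne_zero {g : ℝ → ℝ} {a b : ℝ} (hg : Continuous g) (ha : g a < 0)
    (hne : ∀ s ∈ Ioo a b, g s ≠ 0) : ∀ s ∈ Ioo a b, g s < 0 := by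
  intro s hs
  refine (hne s hs).lt_or_gt.resolve_right fun hpos => ?_
  obtain ⟨t, ht, hgt⟩ := intermediate_value_Ioo hs.1.le hg.continuousOn ⟨ha, hpos⟩
  exact hne t ⟨ht.1, ht.2.trans hs.2⟩ hgt

theorem eventually_lt_nhdsGT_of_deriv_pos {f : ℝ → ℝ} {x₀ : ℝ} (hf : Continuous f)
    (hderiv : ∀ᶠ x in 𝓝[>] x₀, 0 < deriv f x) : ∀ᶠ x in 𝓝[>] x₀, f x₀ < f x := by
  obtain ⟨u, hu, hsub⟩ := mem_nhdsGT_iff_exists_Ioo_subset.1 hderiv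
  have hmono : StrictMonoOn f (Ico x₀ u) :=
    strictMonoOn_of_deriv_pos (convex_Ico x₀ u) hf.continuousOn
      (by rw [interior_Ico]; exact hsub)
  filter_upwards [Ioo_mem_nhdsGT hu] with x hx
  exact hmono (left_mem_Ico.2 hu) (Ioo_subset_Ico_self hx) hx.1

theorem eventually_deriv_pos_nhdsGT {F : ℝ → ℝ} (hF : ContDiff ℝ ∞ F) {c φp : ℝ} (hc : 0 < c)
    (hF1 : deriv F 0 = -c) (hφp : 0 < φp) (hcrit : deriv F φp = 0)
    (hfirst : ∀ s, 0 < s → s < φp → deriv F s ≠ 0) {a : ℕ} (ha : 2 ≤ a) (haeven : Even a)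
    (hvan : ∀ m, 2 ≤ m → m < a → iteratedDeriv m F φp = 0)
    (hnz : iteratedDeriv a F φp ≠ 0) :
    ∀ᶠ s in 𝓝[>] φp, 0 < deriv F s := by
  obtain ⟨n, rfl⟩ : ∃ n, a = n + 2 := ⟨a - 2, by omega⟩
  have hg : ContDiff ℝ ∞ (deriv F) := hF.iterate_deriv 1
  have hvan' : ∀ m ≤ n, iteratedDeriv m (deriv F) φp = 0 := by
    rintro (_ | m) hm
    · simpa using hcrit
    · rw [← iteratedDeriv_succ']
      exact hvan (m + 2) (by omega) (by omega)
  have hneg : ∀ s ∈ Ioo 0 φp, deriv F s < 0 :=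
    neg_on_Ioo_of_ne_zero hg.continuous (by linarith) fun s hs => hfirst s hs.1 hs.2
  refine eventually_pos_nhdsGT_of_odd_order (hg.of_le (by exact_mod_cast le_top)) hvan'
    (by rwa [← iteratedDeriv_succ']) ?_ ?_
  · obtain ⟨k, hk⟩ := haeven
    exact ⟨k - 1, by omega⟩
  · exact Eventually.frequently (mem_of_superset (Ioo_mem_nhdsLT hφp) hneg)

theorem exists_eq_and_lt_on_Ioc {f : ℝ → ℝ} {a b v : ℝ} (hf : Continuous f)
    (hab : a ≤ b) (ha : f a ≤ v) (hb : v < f b) :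
    ∃ α ∈ Ico a b, f α = v ∧ ∀ t ∈ Ioc α b, v < f t := by
  set S := Icc a b ∩ {t | f t ≤ v}
  have hS : IsCompact S := isCompact_Icc.inter_right (isClosed_le hf continuous_const)
  obtain ⟨hαS, hαmax⟩ := hS.isGreatest_sSup ⟨a, ⟨le_rfl, hab⟩, ha⟩
  set α := sSup S
  have hαb : α < b := lt_of_le_of_ne hαS.1.2 fun h => (h ▸ hb).not_ge hαS.2
  have habove : ∀ t ∈ Ioc α b, v < f t := fun t ht =>
    not_le.1 fun hle => (hαmax ⟨⟨hαS.1.1.trans ht.1.le, ht.2⟩, hle⟩).not_gt ht.1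
  obtain ⟨u, hu, hfu⟩ := intermediate_value_Icc hαb.le hf.continuousOn ⟨hαS.2, hb.le⟩
  have hua : u = α := le_antisymm (hαmax ⟨⟨hαS.1.1.trans hu.1, hu.2⟩, hfu.le⟩) hu.1
  exact ⟨α, ⟨hαS.1.1, hαb⟩, hua ▸ hfu, habove⟩

theorem exists_eq_and_lt_on_Ico {f : ℝ → ℝ} {a b v : ℝ} (hf : Continuous f)
    (hab : a ≤ b) (ha : v < f a) (hb : f b ≤ v) :
    ∃ β ∈ Ioc a b, f β = v ∧ ∀ t ∈ Ico a β, v < f t := by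
  obtain ⟨β, hβ, hfβ, habove⟩ := exists_eq_and_lt_on_Ioc (f := fun t => f (-t))
    (hf.comp continuous_neg) (neg_le_neg hab) (by simpa using hb) (by simpa using ha)
  refine ⟨-β, ⟨lt_neg.1 hβ.2, neg_le.2 hβ.1⟩, hfβ, fun t ht => ?_⟩
  simpa using habove (-t) ⟨lt_neg.1 ht.2, neg_le_neg ht.1⟩

theorem exists_nonpos_of_intervalIntegral_eq_zero {f : ℝ → ℝ} {a b : ℝ} (hf : Continuous f)
    (hab : a < b) (h0 : ∫ y in a..b, f y = 0) : ∃ z, f z ≤ 0 := by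
  by_contra! hpos
  exact (intervalIntegral.intervalIntegral_pos_of_pos (hf.intervalIntegrable a b) hpos hab).ne' h0

theorem Kper_eq_fract (x : ℝ) :
    Kper x = π * (Int.fract (x / (2 * π)) ^ 2 - Int.fract (x / (2 * π))) + π / 6 := by
  set t := x / (2 * π) with ht
  have hx : x = 2 * π * t := by rw [ht]; field_simp
  have habs : |x - 2 * π * ((round t : ℤ) : ℝ)| = 2 * π * |t - round t| := by
    rw [hx, ← mul_sub, abs_mul, abs_of_pos two_pi_pos]
  rw [Kper, ← ht, habs, abs_sub_round_eq_min]
  rcases min_cases (Int.fract t) (1 - Int.fract t) with ⟨h, _⟩ | ⟨h, _⟩ <;> rw [h] <;>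
    field_simp <;> ring

theorem Kper_periodic : Function.Periodic Kper (2 * π) := by
  intro x
  rw [Kper_eq_fract, Kper_eq_fract, add_div, div_self two_pi_pos.ne', Int.fract_add_one]

theorem Kper_of_mem_Icc {u : ℝ} (hu : u ∈ Icc (-π) π) :
    Kper u = 1 / (4 * π) * (|u| - π) ^ 2 - π / 12 := by
  have hπ := pi_pos
  rw [Kper_eq_fract]
  rcases le_or_gt 0 u with h0 | h0
  · have hf : Int.fract (u / (2 * π)) = u / (2 * π) := by
      refine Int.fract_eq_self.2 ⟨by positivity, ?_⟩
      rw [div_lt_one (by positivity)]; linarith [hu.2]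
    rw [hf, abs_of_nonneg h0]; field_simp; ring
  · have hf : Int.fract (u / (2 * π)) = u / (2 * π) + 1 := by
      rw [← Int.fract_add_one, Int.fract_eq_self]
      constructor
      · rw [← neg_le_iff_add_nonneg', ← neg_div, div_le_one two_pi_pos]; linarith [hu.1]
      · linarith [div_neg_of_neg_of_pos h0 two_pi_pos]
    rw [hf, abs_of_neg h0]; field_simp; ring

theorem Function.Periodic.intervalIntegral_sub_pi_add_pi {f : ℝ → ℝ}
    (hf : Function.Periodic f (2 * π)) (x : ℝ) :
    ∫ y in (x - π)..(x + π), f y = ∫ y in (-π)..π, f y := by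
  have h := hf.intervalIntegral_add_eq (x - π) (-π)
  rwa [show x - π + 2 * π = x + π by ring, show -π + 2 * π = π by ring] at h

noncomputable def moment (φ : ℝ → ℝ) (k : ℕ) (x : ℝ) : ℝ := ∫ y in (0 : ℝ)..x, y ^ k * φ y

noncomputable def quadMoment (φ : ℝ → ℝ) (p v : ℝ) : ℝ :=
  p ^ 2 * moment φ 0 v - 2 * p * moment φ 1 v + moment φ 2 v

noncomputable def linMoment (φ : ℝ → ℝ) (p v : ℝ) : ℝ := p * moment φ 0 v - moment φ 1 v

section Moments

variable {φ : ℝ → ℝ} (hφ : Continuous φ)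
include hφ

theorem hasDerivAt_moment (k : ℕ) (x : ℝ) : HasDerivAt (moment φ k) (x ^ k * φ x) x :=
  (((continuous_pow k).mul hφ).integral_hasStrictDerivAt 0 x).hasDerivAt

theorem HasDerivAt.quadMoment {p v : ℝ → ℝ} {p' v' x : ℝ} (hp : HasDerivAt p p' x)
    (hv : HasDerivAt v v' x) :
    HasDerivAt (fun t => quadMoment φ (p t) (v t))
      (2 * p' * linMoment φ (p x) (v x) + v' * ((p x - v x) ^ 2 * φ (v x))) x := by
  have hm := fun k => (hasDerivAt_moment hφ k (v x)).comp x hv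
  refine (((hp.pow 2).mul (hm 0)).sub ((hp.const_mul 2).mul (hm 1)) |>.add (hm 2)).congr_deriv ?_
  simp only [linMoment, Function.comp_apply, Pi.pow_apply]
  push_cast
  ring

theorem HasDerivAt.linMoment {p v : ℝ → ℝ} {p' v' x : ℝ} (hp : HasDerivAt p p' x)
    (hv : HasDerivAt v v' x) :
    HasDerivAt (fun t => linMoment φ (p t) (v t))
      (p' * moment φ 0 (v x) + v' * ((p x - v x) * φ (v x))) x := by
  have hm := fun k => (hasDerivAt_moment hφ k (v x)).comp x hv
  refine ((hp.mul (hm 0)).sub (hm 1)).congr_deriv ?_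
  simp only [Function.comp_apply]
  ring

theorem integral_sq_mul_eq_quadMoment_sub (p u v : ℝ) :
    ∫ y in u..v, (p - y) ^ 2 * φ y = quadMoment φ p v - quadMoment φ p u :=
  intervalIntegral.integral_eq_sub_of_hasDerivAt
    (fun y _ => by simpa using (hasDerivAt_const y p).quadMoment hφ (hasDerivAt_id y))
    ((by fun_prop : Continuous fun y => (p - y) ^ 2 * φ y).intervalIntegrable _ _)

theorem integral_eq_moment_zero_sub (u v : ℝ) :
    ∫ y in u..v, φ y = moment φ 0 v - moment φ 0 u :=
  intervalIntegral.integral_eq_sub_of_hasDerivAt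
    (fun y _ => by simpa using hasDerivAt_moment hφ 0 y) (hφ.intervalIntegrable _ _)

end Moments

section Kconv

variable {φ : ℝ → ℝ} (hφ : Continuous φ) (hper : Function.Periodic φ (2 * π))
  (hmean : ∫ y in (-π)..π, φ y = 0)
include hφ hper hmean

theorem Kconv_eq_quadMoment (x : ℝ) :
    Kconv φ x = (quadMoment φ (x - π) x - quadMoment φ (x - π) (x - π)
      + (quadMoment φ (x + π) (x + π) - quadMoment φ (x + π) x)) / (4 * π) := by
  have hπ := pi_pos
  have hint : ∀ f : ℝ → ℝ, Continuous f → ∀ u v : ℝ, IntervalIntegrable f volume u v :=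
    fun f hf u v => hf.intervalIntegrable u v
  have hshift : Kconv φ x = ∫ y in (x - π)..(x + π), Kper (x - y) * φ y := by
    refine (Function.Periodic.intervalIntegral_sub_pi_add_pi (fun y => ?_) x).symm
    simp only [sub_add_eq_sub_sub, Kper_periodic.sub_eq, hper y]
  have hKper : ∫ y in (x - π)..(x + π), Kper (x - y) * φ y
      = ∫ y in (x - π)..(x + π), (1 / (4 * π) * ((|x - y| - π) ^ 2 * φ y) - π / 12 * φ y) := by
    refine intervalIntegral.integral_congr fun y hy => ?_
    rw [uIcc_of_le (by linarith)] at hy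
    rw [Kper_of_mem_Icc ⟨by linarith [hy.2], by linarith [hy.1]⟩]
    ring
  have hsplit : ∫ y in (x - π)..(x + π), (|x - y| - π) ^ 2 * φ y
      = (∫ y in (x - π)..x, (x - π - y) ^ 2 * φ y) + ∫ y in x..(x + π), (x + π - y) ^ 2 * φ y := by
    rw [← intervalIntegral.integral_add_adjacent_intervals (b := x) (hint _ (by fun_prop) _ _)
      (hint _ (by fun_prop) _ _)]
    congr 1 <;> refine intervalIntegral.integral_congr fun y hy => ?_
    · rw [uIcc_of_le (by linarith)] at hy
      simp only [abs_of_nonneg (sub_nonneg.2 hy.2)]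
      ring
    · rw [uIcc_of_le (by linarith)] at hy
      simp only [abs_of_nonpos (sub_nonpos.2 hy.1)]
      ring
  rw [hshift, hKper, intervalIntegral.integral_sub (hint _ (by fun_prop) _ _)
    (hint _ (by fun_prop) _ _), intervalIntegral.integral_const_mul,
    intervalIntegral.integral_const_mul, hper.intervalIntegral_sub_pi_add_pi, hmean, hsplit,
    integral_sq_mul_eq_quadMoment_sub hφ, integral_sq_mul_eq_quadMoment_sub hφ]
  ring

theorem hasDerivAt_Kconv (x : ℝ) :
    HasDerivAt (Kconv φ) ((linMoment φ (x - π) x - linMoment φ (x - π) (x - π)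
      + (linMoment φ (x + π) (x + π) - linMoment φ (x + π) x)) / (2 * π)) x := by
  rw [funext (Kconv_eq_quadMoment hφ hper hmean)]
  have hid := hasDerivAt_id' x
  have hsub := hid.sub_const π
  have hadd := hid.add_const π
  refine ((((hsub.quadMoment hφ hid).sub (hsub.quadMoment hφ hsub)).add
    ((hadd.quadMoment hφ hadd).sub (hadd.quadMoment hφ hid))).div_const (4 * π)).congr_deriv ?_
  field_simp
  ring

theorem hasDerivAt_deriv_Kconv (x : ℝ) : HasDerivAt (deriv (Kconv φ)) (-φ x) x := by
  have hπ := pi_pos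
  rw [funext fun x => (hasDerivAt_Kconv hφ hper hmean x).deriv]
  have hwindow : moment φ 0 (x + π) - moment φ 0 (x - π) = 0 := by
    rw [← integral_eq_moment_zero_sub hφ, hper.intervalIntegral_sub_pi_add_pi, hmean]
  have hid := hasDerivAt_id' x
  have hsub := hid.sub_const π
  have hadd := hid.add_const π
  refine ((((hsub.linMoment hφ hid).sub (hsub.linMoment hφ hsub)).add
    ((hadd.linMoment hφ hadd).sub (hadd.linMoment hφ hid))).div_const (2 * π)).congr_deriv ?_
  field_simp
  linear_combination hwindow

theorem strictConvexOn_neg_Kconv_add (B : ℝ) {s : Set ℝ} (hs : Convex ℝ s)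
    (hpos : ∀ x ∈ interior s, 0 < φ x) : StrictConvexOn ℝ s fun x => -Kconv φ x + B := by
  have hcont : Continuous (Kconv φ) :=
    continuous_iff_continuousAt.2 fun x => (hasDerivAt_Kconv hφ hper hmean x).continuousAt
  refine strictConvexOn_of_deriv2_pos hs (by fun_prop) fun x hx => ?_
  have hW' : (deriv fun x => -Kconv φ x + B) = -deriv (Kconv φ) := by
    rw [deriv_add_const']
    exact deriv.neg'
  have hW'' : HasDerivAt (deriv fun x => -Kconv φ x + B) (φ x) x := by
    simpa [hW'] using (hasDerivAt_deriv_Kconv hφ hper hmean x).neg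
  rw [Function.iterate_succ_apply', Function.iterate_one, hW''.deriv]
  exact hpos x hx

end Kconv

theorem amplitude_bound_even_general (F : ℝ → ℝ) (c : ℝ) (hc : 0 < c)
    (hF : ∀ x, AnalyticAt ℝ F x) (hF1 : deriv F 0 = -c) (B : ℝ)
    (φp : ℝ) (hφp_pos : 0 < φp) (hcrit : deriv F φp = 0)
    (hfirst : ∀ s, 0 < s → s < φp → deriv F s ≠ 0)
    (a : ℕ) (ha : 2 ≤ a) (haeven : Even a)
    (hvan : ∀ m, 2 ≤ m → m < a → iteratedDeriv m F φp = 0)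
    (hnz : iteratedDeriv a F φp ≠ 0)
    (φ : ℝ → ℝ) (hφc : Continuous φ) (hφper : Function.Periodic φ (2 * π))
    (hφ0 : (∫ y in (-π)..π, φ y) = 0)
    (heq : ∀ x, F (φ x) = -(Kconv φ x) + B) :
    ∀ x, φ x ≤ φp := by
  have hFsmooth : ContDiff ℝ ∞ F := AnalyticOnNhd.contDiff fun x _ => hF x
  have hFright : ∀ᶠ y in 𝓝[>] φp, F φp < F y := eventually_lt_nhdsGT_of_deriv_pos
    hFsmooth.continuous (eventually_deriv_pos_nhdsGT hFsmooth hc hF1 hφp_pos hcrit hfirst ha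
      haeven hvan hnz)
  intro x₀
  by_contra! hx₀
  obtain ⟨z, hz⟩ := exists_nonpos_of_intervalIntegral_eq_zero hφc (by linarith [pi_pos]) hφ0
  obtain ⟨y, hy, hφy⟩ := hφper.exists_mem_Ico two_pi_pos z (x₀ - 2 * π)
  obtain ⟨α, hα, hφα, hαexc⟩ := exists_eq_and_lt_on_Ioc (a := y) hφc
    (by linarith [hy.2]) (by linarith) hx₀
  obtain ⟨β, hβ, hφβ, hβexc⟩ := exists_eq_and_lt_on_Ico (b := y + 2 * π) hφc
    (by linarith [hy.1]) hx₀ (by rw [hφper, ← hφy]; linarith)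
  have hαβ : α < β := hα.2.trans_le hβ.1.le
  have hexc : ∀ t ∈ Ioo α β, φp < φ t := fun t ht =>
    (le_total t x₀).elim (fun h => hαexc t ⟨ht.1, h⟩) fun h => hβexc t ⟨h, ht.2⟩
  have hbelow : ∀ t ∈ Ioo α β, F (φ t) < F φp := by
    intro t ht
    have hconv := strictConvexOn_neg_Kconv_add hφc hφper hφ0 B (convex_Icc α β)
      (by rw [interior_Icc]; exact fun t ht => hφp_pos.trans (hexc t ht))
    have := hconv.lt_on_openSegment (left_mem_Icc.2 hαβ.le) (right_mem_Icc.2 hαβ.le) hαβ.ne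
      (by rwa [openSegment_eq_Ioo hαβ])
    rwa [← heq, ← heq, ← heq, hφα, hφβ, max_self] at this
  have hφright : Tendsto φ (𝓝[>] α) (𝓝[>] φp) := tendsto_nhdsWithin_iff.2
    ⟨hφα ▸ hφc.continuousWithinAt.tendsto, mem_of_superset (Ioo_mem_nhdsGT hαβ) hexc⟩
  obtain ⟨t, hFt, ht⟩ := ((hφright.eventually hFright).and (Ioo_mem_nhdsGT hαβ)).exists
  exact (hbelow t ht).not_gt hFt

/-- Amplitude bound when `a` is even: if `φ̄₊ > 0` is the smallest positive critical point
of `F` and `a = min{n ≥ 2 : F⁽ⁿ⁾(φ̄₊) ≠ 0}` is even, then every continuous periodic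
zero-mean solution of `F(φ) = −K∗φ + B` is bounded above by `φ̄₊`. -/
theorem amplitude_bound_even (F : ℝ → ℝ) (c : ℝ) (hc : 0 < c)
    (hF : ∀ x, AnalyticAt ℝ F x) (hF0 : F 0 = 0) (hF1 : deriv F 0 = -c) (B : ℝ)
    (φp : ℝ) (hφp_pos : 0 < φp) (hcrit : deriv F φp = 0)
    (hfirst : ∀ s, 0 < s → s < φp → deriv F s ≠ 0)
    (a : ℕ) (ha : 2 ≤ a) (haeven : Even a)
    (hvan : ∀ m, 2 ≤ m → m < a → iteratedDeriv m F φp = 0)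
    (hnz : iteratedDeriv a F φp ≠ 0)
    (φ : ℝ → ℝ) (hφc : Continuous φ) (hφper : Function.Periodic φ (2 * π))
    (hφ0 : (∫ y in (-π)..π, φ y) = 0)
    (heq : ∀ x, F (φ x) = -(Kconv φ x) + B) :
    ∀ x, φ x ≤ φp :=
  amplitude_bound_even_general F c hc hF hF1 B φp hφp_pos hcrit hfirst a ha haeven hvan hnz φ hφc
    hφper hφ0 heq
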